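/- arXiv:1305.6601 — 2 statements merged into one kernel-verified Lean document; each statement's English description precedes it below -/
import Mathlib

section
/- Let f : I ⊆ (0,∞) → (0,∞) be differentiable on I°, let a, b ∈ I° with a < b, f' integrable on [a,b], and suppose |f'|^q is s-geometrically convex on [a,b] for some q ≥ 1 and s ∈ (0,1]. If |f'(a)| ≤ 1 and |f'(b)| ≤ 1, then |(f(a)+f(b))/2 − (1/(ln b − ln a)) ∫_a^b f(x)/x dx| ≤ ln(b/a) · (1/2)^{2−1/q} · [ a|f'(a)|^s g₁(θ₁)^{1/q} + b|f'(b)|^s g₁(θ₂)^{1/q} ]. -/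
open Real MeasureTheory Set

/-- `g` is `s`-geometrically convex on `J`. -/
def SGeometricallyConvexOn (s : ℝ) (J : Set ℝ) (g : ℝ → ℝ) : Prop :=
  ∀ x ∈ J, ∀ y ∈ J, ∀ t ∈ Set.Icc (0:ℝ) 1,
    g (x ^ t * y ^ (1 - t)) ≤ g x ^ t ^ s * g y ^ (1 - t) ^ s

noncomputable def g₁ (u : ℝ) : ℝ :=
  if u = 1 then 1/2 else (u * Real.log u - u + 1) / (Real.log u) ^ 2

noncomputable def g₂ (u : ℝ) : ℝ :=
  if u = 1 then 1 else (u - 1) / Real.log u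

/-!
Substituting `x = b ^ t * a ^ (1 - t)`, so that `dx / x = log (b / a) dt`, and integrating by
parts turns the left-hand side into `log (b / a) * |∫₀¹ (t - 1/2) ψ t dt|` with
`ψ t = x f' x`. As `|t - 1/2| ≤ (t + (1 - t)) / 2`, it suffices to bound `∫ t |ψ t|` and
`∫ (1 - t) |ψ t|`. Hölder's inequality for the weight `t` reduces the first to `∫ t |ψ t| ^ q`;
`s`-geometric convexity and `|f'| ≤ 1` at the endpoints (so that `c ^ (t ^ s) ≤ c ^ (s t)`)
bound `|ψ t| ^ q` by `(Q ^ q) ^ t * (P ^ q) ^ (1 - t)` with `P = a |f' a| ^ s`,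
`Q = b |f' b| ^ s`, and `∫₀¹ t * θ ^ t dt = g₁ θ`. The second bound is the first one after
`t ↦ 1 - t`.
-/

theorem integral_mul_rpow_eq_g₁ {u : ℝ} (hu : 0 ≤ u) :
    ∫ t in (0:ℝ)..1, t * u ^ t = g₁ u := by
  rcases hu.eq_or_lt with rfl | hu
  -- `g₁ 0 = 1 / (log 0) ^ 2 = 0` with Lean's conventions `log 0 = 0` and `1 / 0 = 0`
  · have hzero : (fun t : ℝ => t * (0:ℝ) ^ t) = fun _ => 0 := by
      ext t
      rcases eq_or_ne t 0 with rfl | ht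
      · simp
      · simp [Real.zero_rpow ht]
    simp [hzero, g₁]
  rcases eq_or_ne u 1 with rfl | hu1
  · simp [g₁, integral_id]
  have hlog : Real.log u ≠ 0 := Real.log_ne_zero_of_pos_of_ne_one hu hu1
  have hderiv : ∀ t : ℝ, HasDerivAt (fun t => u ^ t * (Real.log u * t - 1) / Real.log u ^ 2)
      (t * u ^ t) t := by
    intro t
    refine (((Real.hasStrictDerivAt_const_rpow hu t).hasDerivAt.mul
      (((hasDerivAt_id t).const_mul _).sub_const 1)).div_const _).congr_deriv ?_
    simp only [id]
    field_simp
    ring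
  have hcont : Continuous fun t : ℝ => t * u ^ t :=
    continuous_id.mul (continuous_const.rpow continuous_id fun _ => Or.inl hu.ne')
  rw [intervalIntegral.integral_eq_sub_of_hasDerivAt (fun t _ => hderiv t)
    (hcont.intervalIntegrable 0 1), g₁, if_neg hu1]
  simp only [Real.rpow_one, Real.rpow_zero, mul_one, mul_zero]
  field_simp
  ring

theorem g₁_nonneg {u : ℝ} (hu : 0 ≤ u) : 0 ≤ g₁ u := by
  rw [← integral_mul_rpow_eq_g₁ hu]
  exact intervalIntegral.integral_nonneg zero_le_one fun t ht =>
    mul_nonneg ht.1 (Real.rpow_nonneg hu t)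

theorem rpow_rpow_comm {x : ℝ} (hx : 0 ≤ x) (y z : ℝ) : (x ^ y) ^ z = (x ^ z) ^ y := by
  rw [← Real.rpow_mul hx, ← Real.rpow_mul hx, mul_comm]

theorem rpow_mul_rpow_one_sub_eq {X Y t : ℝ} (hX : 0 ≤ X) (hY : 0 ≤ Y) (ht : t < 1) :
    Y ^ t * X ^ (1 - t) = X * (Y / X) ^ t := by
  rcases hX.eq_or_lt with rfl | hX
  -- `t < 1` rules out `0 ^ (1 - t) = 0 ^ 0 = 1`
  · simp [Real.zero_rpow (sub_ne_zero.2 ht.ne')]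
  rw [Real.div_rpow hY hX.le, Real.rpow_sub hX, Real.rpow_one]
  field_simp

theorem intervalIntegral_eq_integral_Ioo {a b : ℝ} (hab : a ≤ b) (f : ℝ → ℝ) :
    ∫ t in a..b, f t = ∫ t in Ioo a b, f t := by
  rw [intervalIntegral.integral_of_le hab, integral_Ioc_eq_integral_Ioo]

theorem integral_mul_rpow_mul_rpow_one_sub {X Y : ℝ} (hX : 0 ≤ X) (hY : 0 ≤ Y) :
    ∫ t in (0:ℝ)..1, t * (Y ^ t * X ^ (1 - t)) = X * g₁ (Y / X) := by
  rw [← integral_mul_rpow_eq_g₁ (div_nonneg hY hX), ← intervalIntegral.integral_const_mul,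
    intervalIntegral_eq_integral_Ioo zero_le_one, intervalIntegral_eq_integral_Ioo zero_le_one]
  refine setIntegral_congr_fun measurableSet_Ioo fun t ht => ?_
  rw [rpow_mul_rpow_one_sub_eq hX hY ht.2]
  ring

theorem intervalIntegrable_rpow_mul_rpow_one_sub {X Y : ℝ} (hX : 0 ≤ X) (hY : 0 ≤ Y) :
    IntervalIntegrable (fun t => Y ^ t * X ^ (1 - t)) volume 0 1 := by
  have hmaj : IntervalIntegrable (fun t => t * Y + (1 - t) * X) volume 0 1 :=
    (by fun_prop : Continuous fun t : ℝ => t * Y + (1 - t) * X).intervalIntegrable 0 1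
  refine hmaj.mono_fun' (by fun_prop) ?_
  rw [Filter.EventuallyLE, ae_restrict_iff' measurableSet_uIoc]
  refine Filter.Eventually.of_forall fun t ht => ?_
  rw [uIoc_of_le zero_le_one] at ht
  rw [Real.norm_of_nonneg (by positivity)]
  exact Real.geom_mean_le_arith_mean2_weighted ht.1.le (by linarith [ht.2]) hY hX (by ring)

theorem integral_mul_le_integral_rpow_mul_integral_mul_rpow {α : Type*} [MeasurableSpace α]
    {μ : Measure α} {w g : α → ℝ} {q : ℝ} (hq : 1 ≤ q) (hw : 0 ≤ᵐ[μ] w) (hg : 0 ≤ᵐ[μ] g)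
    (hw_int : Integrable w μ) (hg_meas : AEStronglyMeasurable g μ)
    (hwg_int : Integrable (fun x => w x * g x ^ q) μ) :
    ∫ x, w x * g x ∂μ ≤ (∫ x, w x ∂μ) ^ (1 - 1 / q) * (∫ x, w x * g x ^ q ∂μ) ^ (1 / q) := by
  rcases hq.eq_or_lt with rfl | hq1
  · simp
  -- Hölder with exponents `p, q` applied to `w ^ (1/p)` and `w ^ (1/q) * g`
  set p := q.conjExponent
  have hpq : p.HolderConjugate q := (Real.HolderConjugate.conjExponent hq1).symm
  have hp0 : 0 < p := hpq.pos
  have hq0 : 0 < q := hpq.symm.pos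
  have hsum : 1 / p + 1 / q = 1 := by simpa using hpq.one_div_add_one_div
  have hF : ∀ᵐ x ∂μ, (w x ^ (1 / p)) ^ p = w x := by
    filter_upwards [hw] with x hx
    rw [← Real.rpow_mul hx, one_div_mul_cancel hp0.ne', Real.rpow_one]
  have hG : ∀ᵐ x ∂μ, (w x ^ (1 / q) * g x) ^ q = w x * g x ^ q := by
    filter_upwards [hw, hg] with x hx hgx
    rw [Real.mul_rpow (Real.rpow_nonneg hx _) hgx, ← Real.rpow_mul hx, one_div_mul_cancel hq0.ne',
      Real.rpow_one]
  have hFG : ∀ᵐ x ∂μ, w x ^ (1 / p) * (w x ^ (1 / q) * g x) = w x * g x := by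
    filter_upwards [hw] with x hx
    rw [← mul_assoc, ← Real.rpow_add' hx (by rw [hsum]; norm_num), hsum, Real.rpow_one]
  have hF_meas : AEStronglyMeasurable (fun x => w x ^ (1 / p)) μ :=
    (hw_int.aemeasurable.pow_const _).aestronglyMeasurable
  have hG_meas : AEStronglyMeasurable (fun x => w x ^ (1 / q) * g x) μ :=
    (hw_int.aemeasurable.pow_const _).aestronglyMeasurable.mul hg_meas
  have hF_mem : MemLp (fun x => w x ^ (1 / p)) (ENNReal.ofReal p) μ := by
    refine (integrable_norm_rpow_iff hF_meas (by simpa using hp0) ENNReal.ofReal_ne_top).1 ?_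
    refine hw_int.congr ?_
    filter_upwards [hw, hF] with x hx hFx
    rw [ENNReal.toReal_ofReal hp0.le, Real.norm_of_nonneg (Real.rpow_nonneg hx _), hFx]
  have hG_mem : MemLp (fun x => w x ^ (1 / q) * g x) (ENNReal.ofReal q) μ := by
    refine (integrable_norm_rpow_iff hG_meas (by simpa using hq0) ENNReal.ofReal_ne_top).1 ?_
    refine hwg_int.congr ?_
    filter_upwards [hw, hg, hG] with x hx hgx hGx
    rw [ENNReal.toReal_ofReal hq0.le,
      Real.norm_of_nonneg (mul_nonneg (Real.rpow_nonneg hx _) hgx), hGx]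
  have holder := integral_mul_le_Lp_mul_Lq_of_nonneg hpq
    (by filter_upwards [hw] with x hx; exact Real.rpow_nonneg hx _)
    (by filter_upwards [hw, hg] with x hx hgx; exact mul_nonneg (Real.rpow_nonneg hx _) hgx)
    hF_mem hG_mem
  rwa [integral_congr_ae hFG, integral_congr_ae hF, integral_congr_ae hG,
    show 1 / p = 1 - 1 / q by linarith] at holder

theorem integral_mul_le_of_rpow_le {α : Type*} [MeasurableSpace α] {μ : Measure α}
    {w g v : α → ℝ} {q : ℝ} (hq : 1 ≤ q) (hw : 0 ≤ᵐ[μ] w) (hg : 0 ≤ᵐ[μ] g)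
    (hw_int : Integrable w μ) (hg_meas : AEStronglyMeasurable g μ)
    (hwv_int : Integrable (fun x => w x * v x) μ) (hgv : ∀ᵐ x ∂μ, g x ^ q ≤ v x) :
    ∫ x, w x * g x ∂μ ≤ (∫ x, w x ∂μ) ^ (1 - 1 / q) * (∫ x, w x * v x ∂μ) ^ (1 / q) := by
  have hle : ∀ᵐ x ∂μ, w x * g x ^ q ≤ w x * v x := by
    filter_upwards [hw, hgv] with x hx hgvx
    exact mul_le_mul_of_nonneg_left hgvx hx
  have hwg_nonneg : 0 ≤ᵐ[μ] fun x => w x * g x ^ q := by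
    filter_upwards [hw, hg] with x hx hgx
    exact mul_nonneg hx (Real.rpow_nonneg hgx q)
  have hwg_int : Integrable (fun x => w x * g x ^ q) μ := by
    refine hwv_int.mono' (hw_int.1.mul (hg_meas.aemeasurable.pow_const q).aestronglyMeasurable) ?_
    filter_upwards [hwg_nonneg, hle] with x hx hlex
    rwa [Real.norm_of_nonneg hx]
  refine (integral_mul_le_integral_rpow_mul_integral_mul_rpow hq hw hg hw_int hg_meas
    hwg_int).trans (mul_le_mul_of_nonneg_left ?_ (Real.rpow_nonneg (integral_nonneg_of_ae hw) _))
  exact Real.rpow_le_rpow (integral_nonneg_of_ae hwg_nonneg) (integral_mono_ae hwg_int hwv_int hle)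
    (by positivity)

theorem SGeometricallyConvexOn.le_rpow_mul_rpow_one_sub {s : ℝ} {J : Set ℝ} {g : ℝ → ℝ}
    (hg : SGeometricallyConvexOn s J g) (hs0 : 0 ≤ s) (hs1 : s ≤ 1) {x y t : ℝ} (hx : x ∈ J)
    (hy : y ∈ J) (hgx : g x ∈ Icc 0 1) (hgy : g y ∈ Icc 0 1) (ht : t ∈ Icc 0 1) :
    g (x ^ t * y ^ (1 - t)) ≤ (g x ^ s) ^ t * (g y ^ s) ^ (1 - t) := by
  -- on `[0, 1]`, `s u ≤ u ≤ u ^ s`, and `z ↦ c ^ z` is antitone for `c ∈ [0, 1]`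
  have hexp : ∀ u ∈ Icc (0:ℝ) 1, s * u ≤ u ^ s := fun u hu =>
    (mul_le_of_le_one_left hu.1 hs1).trans (Real.self_le_rpow_of_le_one hu.1 hu.2 hs1)
  have h1t : 1 - t ∈ Icc (0:ℝ) 1 := ⟨by linarith [ht.2], by linarith [ht.1]⟩
  calc g (x ^ t * y ^ (1 - t)) ≤ g x ^ t ^ s * g y ^ (1 - t) ^ s := hg x hx y hy t ht
    _ ≤ g x ^ (s * t) * g y ^ (s * (1 - t)) :=
        mul_le_mul
          (Real.rpow_le_rpow_of_exponent_ge' hgx.1 hgx.2 (mul_nonneg hs0 ht.1) (hexp t ht))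
          (Real.rpow_le_rpow_of_exponent_ge' hgy.1 hgy.2 (mul_nonneg hs0 h1t.1) (hexp _ h1t))
          (Real.rpow_nonneg hgy.1 _) (Real.rpow_nonneg hgx.1 _)
    _ = (g x ^ s) ^ t * (g y ^ s) ^ (1 - t) := by rw [Real.rpow_mul hgx.1, Real.rpow_mul hgy.1]

theorem abs_rpow_mul_rpow_one_sub_mul_rpow_le {f' : ℝ → ℝ} {a b s q t : ℝ} (ha : 0 < a)
    (hab : a ≤ b) (hq : 0 ≤ q) (hs0 : 0 ≤ s) (hs1 : s ≤ 1)
    (hconv : SGeometricallyConvexOn s (Icc a b) fun x => |f' x| ^ q)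
    (hfa : |f' a| ≤ 1) (hfb : |f' b| ≤ 1) (ht : t ∈ Icc 0 1) :
    |b ^ t * a ^ (1 - t) * f' (b ^ t * a ^ (1 - t))| ^ q ≤
      ((b * |f' b| ^ s) ^ q) ^ t * ((a * |f' a| ^ s) ^ q) ^ (1 - t) := by
  have hb : 0 < b := ha.trans_le hab
  have hB := abs_nonneg (f' b)
  have hA := abs_nonneg (f' a)
  have hconv' := hconv.le_rpow_mul_rpow_one_sub hs0 hs1 (right_mem_Icc.2 hab)
    (left_mem_Icc.2 hab) ⟨Real.rpow_nonneg hB q, Real.rpow_le_one hB hfb hq⟩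
    ⟨Real.rpow_nonneg hA q, Real.rpow_le_one hA hfa hq⟩ ht
  calc |b ^ t * a ^ (1 - t) * f' (b ^ t * a ^ (1 - t))| ^ q
      = ((b ^ q) ^ t * (a ^ q) ^ (1 - t)) * |f' (b ^ t * a ^ (1 - t))| ^ q := by
        rw [abs_mul, abs_of_pos (by positivity), Real.mul_rpow (by positivity) (abs_nonneg _),
          Real.mul_rpow (by positivity) (by positivity), rpow_rpow_comm hb.le,
          rpow_rpow_comm ha.le]
    _ ≤ ((b ^ q) ^ t * (a ^ q) ^ (1 - t)) *
          (((|f' b| ^ s) ^ q) ^ t * ((|f' a| ^ s) ^ q) ^ (1 - t)) := by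
        rw [rpow_rpow_comm hB s, rpow_rpow_comm hA s]
        gcongr
    _ = ((b * |f' b| ^ s) ^ q) ^ t * ((a * |f' a| ^ s) ^ q) ^ (1 - t) := by
        rw [Real.mul_rpow hb.le (by positivity), Real.mul_rpow ha.le (by positivity),
          Real.mul_rpow (by positivity) (by positivity),
          Real.mul_rpow (by positivity) (by positivity)]
        ring

theorem integral_mul_abs_le_of_abs_rpow_le {ψ : ℝ → ℝ} {P Q q : ℝ} (hq : 1 ≤ q) (hP : 0 ≤ P)
    (hQ : 0 ≤ Q) (hψ : IntervalIntegrable ψ volume 0 1)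
    (hψle : ∀ t ∈ Ioo (0:ℝ) 1, |ψ t| ^ q ≤ (Q ^ q) ^ t * (P ^ q) ^ (1 - t)) :
    ∫ t in (0:ℝ)..1, t * |ψ t| ≤ (1 / 2) ^ (1 - 1 / q) * (P * g₁ ((Q / P) ^ q) ^ (1 / q)) := by
  have hPq : 0 ≤ P ^ q := Real.rpow_nonneg hP q
  have hmem : ∀ᵐ t ∂volume.restrict (Ioo (0:ℝ) 1), t ∈ Ioo (0:ℝ) 1 :=
    ae_restrict_mem measurableSet_Ioo
  have hv_int : IntegrableOn (fun t => t * ((Q ^ q) ^ t * (P ^ q) ^ (1 - t))) (Ioo 0 1) :=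
    ((intervalIntegrable_rpow_mul_rpow_one_sub hPq (Real.rpow_nonneg hQ q)).continuousOn_mul
      continuousOn_id).1.mono_set Ioo_subset_Ioc_self
  rw [intervalIntegral_eq_integral_Ioo zero_le_one]
  calc ∫ t in Ioo (0:ℝ) 1, t * |ψ t|
      ≤ (∫ t in Ioo (0:ℝ) 1, t) ^ (1 - 1 / q) *
          (∫ t in Ioo (0:ℝ) 1, t * ((Q ^ q) ^ t * (P ^ q) ^ (1 - t))) ^ (1 / q) :=
        integral_mul_le_of_rpow_le hq (hmem.mono fun t ht => ht.1.le)
          (Filter.Eventually.of_forall fun t => abs_nonneg _)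
          (continuous_id.integrableOn_Icc.mono_set Ioo_subset_Icc_self)
          (hψ.1.1.mono_set Ioo_subset_Ioc_self).norm hv_int (hmem.mono hψle)
    _ = (1 / 2) ^ (1 - 1 / q) * (P ^ q * g₁ ((Q / P) ^ q)) ^ (1 / q) := by
        rw [← intervalIntegral_eq_integral_Ioo zero_le_one,
          ← intervalIntegral_eq_integral_Ioo zero_le_one, integral_id,
          integral_mul_rpow_mul_rpow_one_sub hPq (Real.rpow_nonneg hQ q), Real.div_rpow hQ hP]
        norm_num
    _ = (1 / 2) ^ (1 - 1 / q) * (P * g₁ ((Q / P) ^ q) ^ (1 / q)) := by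
        rw [Real.mul_rpow hPq (g₁_nonneg (Real.rpow_nonneg (div_nonneg hQ hP) q)),
          ← Real.rpow_mul hP, mul_one_div_cancel (zero_lt_one.trans_le hq).ne', Real.rpow_one]

theorem integral_one_sub_mul_abs_le_of_abs_rpow_le {ψ : ℝ → ℝ} {P Q q : ℝ} (hq : 1 ≤ q)
    (hP : 0 ≤ P) (hQ : 0 ≤ Q) (hψ : IntervalIntegrable ψ volume 0 1)
    (hψle : ∀ t ∈ Ioo (0:ℝ) 1, |ψ t| ^ q ≤ (Q ^ q) ^ t * (P ^ q) ^ (1 - t)) :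
    ∫ t in (0:ℝ)..1, (1 - t) * |ψ t| ≤
      (1 / 2) ^ (1 - 1 / q) * (Q * g₁ ((P / Q) ^ q) ^ (1 / q)) := by
  have hflip : ∫ t in (0:ℝ)..1, (1 - t) * |ψ t| = ∫ t in (0:ℝ)..1, t * |ψ (1 - t)| := by
    simpa using (intervalIntegral.integral_comp_sub_left (fun t => (1 - t) * |ψ t|) (1:ℝ)
      (a := 0) (b := 1)).symm
  rw [hflip]
  refine integral_mul_abs_le_of_abs_rpow_le hq hQ hP
    (by simpa using (hψ.comp_sub_left 1).symm) fun t ht => ?_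
  have h := hψle (1 - t) ⟨by linarith [ht.2], by linarith [ht.1]⟩
  rwa [sub_sub_cancel, mul_comm] at h

theorem abs_integral_sub_half_mul_le {g : ℝ → ℝ} (hg : IntervalIntegrable g volume 0 1) :
    |∫ t in (0:ℝ)..1, (t - 1 / 2) * g t| ≤
      ((∫ t in (0:ℝ)..1, t * |g t|) + ∫ t in (0:ℝ)..1, (1 - t) * |g t|) / 2 := by
  have h₁ : IntervalIntegrable (fun t => t * |g t|) volume 0 1 :=
    hg.abs.continuousOn_mul continuousOn_id
  have h₂ : IntervalIntegrable (fun t => (1 - t) * |g t|) volume 0 1 :=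
    hg.abs.continuousOn_mul (by fun_prop)
  calc |∫ t in (0:ℝ)..1, (t - 1 / 2) * g t|
      ≤ ∫ t in (0:ℝ)..1, |(t - 1 / 2) * g t| :=
        intervalIntegral.abs_integral_le_integral_abs zero_le_one
    _ ≤ ∫ t in (0:ℝ)..1, (t * |g t| + (1 - t) * |g t|) / 2 := by
        refine intervalIntegral.integral_mono_on zero_le_one
          (hg.continuousOn_mul (by fun_prop)).abs ((h₁.add h₂).div_const 2) fun t ht => ?_
        have hhalf : |t - 1 / 2| ≤ 1 / 2 := abs_le.2 ⟨by linarith [ht.1], by linarith [ht.2]⟩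
        rw [abs_mul]
        nlinarith [abs_nonneg (g t)]
    _ = ((∫ t in (0:ℝ)..1, t * |g t|) + ∫ t in (0:ℝ)..1, (1 - t) * |g t|) / 2 := by
        rw [intervalIntegral.integral_div, intervalIntegral.integral_add h₁ h₂]

theorem abs_integral_sub_half_mul_le_of_abs_rpow_le {ψ : ℝ → ℝ} {P Q q : ℝ} (hq : 1 ≤ q)
    (hP : 0 ≤ P) (hQ : 0 ≤ Q) (hψ : IntervalIntegrable ψ volume 0 1)
    (hψle : ∀ t ∈ Ioo (0:ℝ) 1, |ψ t| ^ q ≤ (Q ^ q) ^ t * (P ^ q) ^ (1 - t)) :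
    |∫ t in (0:ℝ)..1, (t - 1 / 2) * ψ t| ≤
      (1 / 2) ^ (2 - 1 / q) *
        (P * g₁ ((Q / P) ^ q) ^ (1 / q) + Q * g₁ ((P / Q) ^ q) ^ (1 / q)) := by
  calc |∫ t in (0:ℝ)..1, (t - 1 / 2) * ψ t|
      ≤ ((∫ t in (0:ℝ)..1, t * |ψ t|) + ∫ t in (0:ℝ)..1, (1 - t) * |ψ t|) / 2 :=
        abs_integral_sub_half_mul_le hψ
    _ ≤ ((1 / 2) ^ (1 - 1 / q) * (P * g₁ ((Q / P) ^ q) ^ (1 / q)) +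
          (1 / 2) ^ (1 - 1 / q) * (Q * g₁ ((P / Q) ^ q) ^ (1 / q))) / 2 := by
        gcongr
        · exact integral_mul_abs_le_of_abs_rpow_le hq hP hQ hψ hψle
        · exact integral_one_sub_mul_abs_le_of_abs_rpow_le hq hP hQ hψ hψle
    _ = (1 / 2) ^ (2 - 1 / q) *
          (P * g₁ ((Q / P) ^ q) ^ (1 / q) + Q * g₁ ((P / Q) ^ q) ^ (1 / q)) := by
        rw [show 2 - 1 / q = 1 + (1 - 1 / q) by ring, Real.rpow_add one_half_pos, Real.rpow_one]
        ring

theorem hasDerivAt_rpow_mul_rpow_one_sub {a b : ℝ} (ha : 0 < a) (hb : 0 < b) (t : ℝ) :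
    HasDerivAt (fun t => b ^ t * a ^ (1 - t))
      ((Real.log b - Real.log a) * (b ^ t * a ^ (1 - t))) t := by
  have h := (Real.hasStrictDerivAt_const_rpow hb t).hasDerivAt.mul
    ((Real.hasStrictDerivAt_const_rpow ha (1 - t)).hasDerivAt.comp t
      ((hasDerivAt_const t 1).sub (hasDerivAt_id t)))
  refine h.congr_deriv ?_
  simp only [Function.comp_apply]
  ring

theorem monotone_rpow_mul_rpow_one_sub {a b : ℝ} (ha : 0 < a) (hab : a ≤ b) :
    Monotone fun t : ℝ => b ^ t * a ^ (1 - t) := by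
  have hb : 0 < b := ha.trans_le hab
  have hφ := hasDerivAt_rpow_mul_rpow_one_sub ha hb
  refine monotone_of_deriv_nonneg (fun t => (hφ t).differentiableAt) fun t => ?_
  rw [(hφ t).deriv]
  exact mul_nonneg (sub_nonneg.2 (Real.log_le_log ha hab)) (by positivity)

theorem rpow_mul_rpow_one_sub_mem_Icc {a b t : ℝ} (ha : 0 < a) (hab : a ≤ b) (ht : t ∈ Icc 0 1) :
    b ^ t * a ^ (1 - t) ∈ Icc a b := by
  have hmono := monotone_rpow_mul_rpow_one_sub ha hab
  exact ⟨by simpa using hmono ht.1, by simpa using hmono ht.2⟩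

theorem integral_div_eq_mul_integral_comp_rpow_mul_rpow {f : ℝ → ℝ} {a b : ℝ} (ha : 0 < a)
    (hab : a ≤ b) (hf : ContinuousOn f (Icc a b)) :
    ∫ x in a..b, f x / x =
      (Real.log b - Real.log a) * ∫ t in (0:ℝ)..1, f (b ^ t * a ^ (1 - t)) := by
  have hb : 0 < b := ha.trans_le hab
  have hφ := hasDerivAt_rpow_mul_rpow_one_sub ha hb
  have hφ_cont : Continuous fun t : ℝ => b ^ t * a ^ (1 - t) :=
    continuous_iff_continuousAt.2 fun t => (hφ t).continuousAt
  have hsubst := intervalIntegral.integral_comp_mul_deriv' (a := (0:ℝ)) (b := 1)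
    (g := fun x => f x / x) (fun t _ => hφ t) (continuous_const.mul hφ_cont).continuousOn
    ((hf.div continuousOn_id fun x hx => (ha.trans_le hx.1).ne').mono ?_)
  · simp only [Real.rpow_zero, Real.rpow_one, sub_zero, sub_self, one_mul, mul_one] at hsubst
    rw [← hsubst, ← intervalIntegral.integral_const_mul]
    refine intervalIntegral.integral_congr fun t _ => ?_
    have : b ^ t * a ^ (1 - t) ≠ 0 := by positivity
    simp only [Function.comp]
    field_simp
  · rintro _ ⟨t, ht, rfl⟩
    rw [uIcc_of_le (zero_le_one' ℝ)] at ht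
    exact rpow_mul_rpow_one_sub_mem_Icc ha hab ht

theorem IntervalIntegrable.rpow_mul_rpow_one_sub_mul_comp {g : ℝ → ℝ} {a b : ℝ} (ha : 0 < a)
    (hab : a < b) (hg : IntervalIntegrable g volume a b) :
    IntervalIntegrable (fun t => b ^ t * a ^ (1 - t) * g (b ^ t * a ^ (1 - t))) volume 0 1 := by
  have hb : 0 < b := ha.trans hab
  have hL : 0 < Real.log b - Real.log a := sub_pos.2 (Real.log_lt_log ha hab)
  have hφ := hasDerivAt_rpow_mul_rpow_one_sub ha hb
  have himage : IntegrableOn g ((fun t : ℝ => b ^ t * a ^ (1 - t)) '' Icc 0 1) := by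
    refine ((intervalIntegrable_iff_integrableOn_Icc_of_le hab.le).1 hg).mono_set ?_
    rintro _ ⟨t, ht, rfl⟩
    exact rpow_mul_rpow_one_sub_mem_Icc ha hab.le ht
  have hderiv := (integrableOn_image_iff_integrableOn_deriv_smul_of_monotoneOn measurableSet_Icc
    (fun t _ => (hφ t).hasDerivWithinAt)
    ((monotone_rpow_mul_rpow_one_sub ha hab.le).monotoneOn _) g).1 himage
  refine (intervalIntegrable_iff_integrableOn_Icc_of_le zero_le_one).2 ?_
  refine IntegrableOn.congr_fun (hderiv.const_mul (Real.log b - Real.log a)⁻¹) (fun t _ => ?_)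
    measurableSet_Icc
  simp only [smul_eq_mul]
  field_simp

theorem trapezoid_sub_integral_eq {F F' : ℝ → ℝ} (hF : ∀ t ∈ Icc (0:ℝ) 1, HasDerivAt F (F' t) t)
    (hF' : IntervalIntegrable F' volume 0 1) :
    (F 0 + F 1) / 2 - ∫ t in (0:ℝ)..1, F t = ∫ t in (0:ℝ)..1, (t - 1 / 2) * F' t := by
  rw [← uIcc_of_le zero_le_one] at hF
  rw [intervalIntegral.integral_mul_deriv_eq_deriv_mul
    (fun t _ => (hasDerivAt_id' t).sub_const (1 / 2)) hF intervalIntegrable_const hF']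
  simp only [one_mul]
  ring

theorem trapezoid_sub_integral_div_eq {f f' : ℝ → ℝ} {a b : ℝ} (ha : 0 < a) (hab : a < b)
    (hf : ∀ x ∈ Icc a b, HasDerivAt f (f' x) x) (hf' : IntervalIntegrable f' volume a b) :
    (f a + f b) / 2 - 1 / (Real.log b - Real.log a) * ∫ x in a..b, f x / x =
      (Real.log b - Real.log a) *
        ∫ t in (0:ℝ)..1, (t - 1 / 2) * (b ^ t * a ^ (1 - t) * f' (b ^ t * a ^ (1 - t))) := by
  have hL : 0 < Real.log b - Real.log a := sub_pos.2 (Real.log_lt_log ha hab)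
  have hF : ∀ t ∈ Icc (0:ℝ) 1, HasDerivAt (fun t => f (b ^ t * a ^ (1 - t)))
      ((Real.log b - Real.log a) * (b ^ t * a ^ (1 - t) * f' (b ^ t * a ^ (1 - t)))) t :=
    fun t ht => ((hf _ (rpow_mul_rpow_one_sub_mem_Icc ha hab.le ht)).comp t
      (hasDerivAt_rpow_mul_rpow_one_sub ha (ha.trans hab) t)).congr_deriv (by ring)
  have htrap := trapezoid_sub_integral_eq hF
    ((hf'.rpow_mul_rpow_one_sub_mul_comp ha hab).const_mul _)
  simp only [Real.rpow_zero, Real.rpow_one, sub_zero, sub_self, one_mul, mul_one] at htrap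
  rw [integral_div_eq_mul_integral_comp_rpow_mul_rpow ha hab.le
    fun x hx => (hf x hx).continuousAt.continuousWithinAt, one_div,
    inv_mul_cancel_left₀ hL.ne', htrap]
  simp_rw [mul_left_comm _ (Real.log b - Real.log a), intervalIntegral.integral_const_mul]

theorem stmt_2_general
    (I : Set ℝ) (hI : I.OrdConnected) (hIpos : I ⊆ Set.Ioi (0:ℝ))
    (f f' : ℝ → ℝ)
    (a b : ℝ) (ha : a ∈ interior I) (hb : b ∈ interior I) (hab : a < b)
    (hdiff : ∀ x ∈ interior I, HasDerivAt f (f' x) x)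
    (hint : IntervalIntegrable f' volume a b)
    (q s : ℝ) (hq : 1 ≤ q) (hs : s ∈ Set.Ioc (0:ℝ) 1)
    (hconv : SGeometricallyConvexOn s (Set.Icc a b) (fun x => |f' x| ^ q))
    (hfa : |f' a| ≤ 1) (hfb : |f' b| ≤ 1) :
    |(f a + f b) / 2 - (1 / (Real.log b - Real.log a)) * ∫ x in a..b, f x / x| ≤
      Real.log (b / a) * (1 / 2 : ℝ) ^ (2 - 1 / q) *
        (a * |f' a| ^ s * (g₁ ((b * |f' b| ^ s / (a * |f' a| ^ s)) ^ (q))) ^ (1 / q)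
         + b * |f' b| ^ s * (g₁ ((a * |f' a| ^ s / (b * |f' b| ^ s)) ^ (q))) ^ (1 / q)) := by
  have ha0 : 0 < a := hIpos (interior_subset ha)
  have hb0 : 0 < b := hIpos (interior_subset hb)
  have hsub : Icc a b ⊆ interior I := hI.interior.out ha hb
  rw [trapezoid_sub_integral_div_eq ha0 hab (fun x hx => hdiff x (hsub hx)) hint, abs_mul,
    abs_of_pos (sub_pos.2 (Real.log_lt_log ha0 hab)), ← Real.log_div hb0.ne' ha0.ne', mul_assoc]
  refine mul_le_mul_of_nonneg_left (abs_integral_sub_half_mul_le_of_abs_rpow_le hq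
    (by positivity) (by positivity) (hint.rpow_mul_rpow_one_sub_mul_comp ha0 hab)
    fun t ht => ?_) (Real.log_nonneg ((one_le_div ha0).2 hab.le))
  exact abs_rpow_mul_rpow_one_sub_mul_rpow_le ha0 hab.le (zero_le_one.trans hq) hs.1.le hs.2
    hconv hfa hfb (Ioo_subset_Icc_self ht)

theorem stmt_2
    (I : Set ℝ) (hI : I.OrdConnected) (hIpos : I ⊆ Set.Ioi (0:ℝ))
    (f f' : ℝ → ℝ) (hfpos : ∀ x ∈ I, 0 < f x)
    (a b : ℝ) (ha : a ∈ interior I) (hb : b ∈ interior I) (hab : a < b)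
    (hdiff : ∀ x ∈ interior I, HasDerivAt f (f' x) x)
    (hint : IntervalIntegrable f' volume a b)
    (q s : ℝ) (hq : 1 ≤ q) (hs : s ∈ Set.Ioc (0:ℝ) 1)
    (hconv : SGeometricallyConvexOn s (Set.Icc a b) (fun x => |f' x| ^ q))
    (hfa : |f' a| ≤ 1) (hfb : |f' b| ≤ 1) :
    |(f a + f b) / 2 - (1 / (Real.log b - Real.log a)) * ∫ x in a..b, f x / x| ≤
      Real.log (b / a) * (1 / 2 : ℝ) ^ (2 - 1 / q) *
        (a * |f' a| ^ s * (g₁ ((b * |f' b| ^ s / (a * |f' a| ^ s)) ^ (q))) ^ (1 / q)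
         + b * |f' b| ^ s * (g₁ ((a * |f' a| ^ s / (b * |f' b| ^ s)) ^ (q))) ^ (1 / q)) :=
  stmt_2_general I hI hIpos f f' a b ha hb hab hdiff hint q s hq hs hconv hfa hfb
end

section
/- Let f : I ⊆ (0,∞) → (0,∞) be differentiable on I°, let a, b ∈ I° with a < b, f' integrable on [a,b], and suppose |f'|^q is s-geometrically convex on [a,b] for some q > 1 and s ∈ (0,1]. If |f'(a)| ≤ 1 and |f'(b)| ≤ 1, then |(f(a)+f(b))/2 − (1/(ln b − ln a)) ∫_a^b f(x)/x dx| ≤ (1/2) ln(b/a) · ((q−1)/(2q−1))^{1−1/q} · [ a|f'(a)|^s g₂(θ₁)^{1/q} + b|f'(b)|^s g₂(θ₂)^{1/q} ]. -/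
open Real MeasureTheory Set

/-!
The substitution `x = a ^ (1 - t) * b ^ t` turns `(1 / log (b / a)) ∫_a^b f x / x dx` into
`∫_0^1 f x dt`, and integrating by parts against `2 t - 1` rewrites the left-hand side as
`(log (b / a) / 2) ∫_0^1 (2 t - 1) x f' x dt`. As `|f'| ≤ 1` at the endpoints and `s t ≤ t ^ s`,
s-geometric convexity gives `x |f' x| ≤ A ^ (1 - t) * B ^ t` with `A = a |f' a| ^ s` and
`B = b |f' b| ^ s`. Hölder's inequality, with `∫_0^1 |2 t - 1| ^ p = 1 / (p + 1)` and
`∫_0^1 (A ^ (1 - t) * B ^ t) ^ q = A ^ q g₂ ((B / A) ^ q)`, then bounds the integral by the first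
of the two terms on the right.
-/

noncomputable def geomInterp (a b t : ℝ) : ℝ := a ^ (1 - t) * b ^ t

section geomInterp

variable {a b c d : ℝ}

@[simp] lemma geomInterp_zero (a b : ℝ) : geomInterp a b 0 = a := by simp [geomInterp]

@[simp] lemma geomInterp_one (a b : ℝ) : geomInterp a b 1 = b := by simp [geomInterp]

lemma geomInterp_nonneg (ha : 0 ≤ a) (hb : 0 ≤ b) (t : ℝ) : 0 ≤ geomInterp a b t := by
  unfold geomInterp; positivity

lemma geomInterp_pos (ha : 0 < a) (hb : 0 < b) (t : ℝ) : 0 < geomInterp a b t := by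
  unfold geomInterp; positivity

lemma geomInterp_eq_exp (ha : 0 < a) (hb : 0 < b) (t : ℝ) :
    geomInterp a b t = exp ((1 - t) * log a + t * log b) := by
  rw [geomInterp, rpow_def_of_pos ha, rpow_def_of_pos hb, ← exp_add]
  ring_nf

lemma geomInterp_mul (ha : 0 ≤ a) (hb : 0 ≤ b) (hc : 0 ≤ c) (hd : 0 ≤ d) (t : ℝ) :
    geomInterp (a * c) (b * d) t = geomInterp a b t * geomInterp c d t := by
  simp only [geomInterp, mul_rpow ha hc, mul_rpow hb hd]
  ring

lemma geomInterp_rpow (ha : 0 ≤ a) (hb : 0 ≤ b) (t q : ℝ) :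
    geomInterp a b t ^ q = geomInterp (a ^ q) (b ^ q) t := by
  simp only [geomInterp, mul_rpow (rpow_nonneg ha _) (rpow_nonneg hb _), ← rpow_mul ha,
    ← rpow_mul hb, mul_comm q]

lemma hasDerivAt_geomInterp (ha : 0 < a) (hb : 0 < b) (t : ℝ) :
    HasDerivAt (geomInterp a b) ((log b - log a) * geomInterp a b t) t := by
  have hexponent : HasDerivAt (fun t : ℝ => (1 - t) * log a + t * log b) (log b - log a) t :=
    (((hasDerivAt_id t).const_sub 1 |>.mul_const (log a)).add
      ((hasDerivAt_id t).mul_const (log b))).congr_deriv (by ring)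
  rw [funext (geomInterp_eq_exp ha hb)]
  simpa [mul_comm] using hexponent.exp

lemma continuous_geomInterp (ha : 0 < a) (hb : 0 < b) : Continuous (geomInterp a b) :=
  continuous_iff_continuousAt.2 fun t => (hasDerivAt_geomInterp ha hb t).continuousAt

lemma strictMono_geomInterp (ha : 0 < a) (hab : a < b) : StrictMono (geomInterp a b) := by
  have hlog : log a < log b := log_lt_log ha hab
  intro s t hst
  rw [geomInterp_eq_exp ha (ha.trans hab), geomInterp_eq_exp ha (ha.trans hab), exp_lt_exp]
  nlinarith

lemma geomInterp_image_Icc (ha : 0 < a) (hab : a < b) :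
    geomInterp a b '' Icc 0 1 = Icc a b := by
  simpa using (continuous_geomInterp ha (ha.trans hab)).continuousOn.image_Icc_of_monotoneOn
    zero_le_one ((strictMono_geomInterp ha hab).monotone.monotoneOn _)

lemma integral_geomInterp (ha : 0 < a) (hb : 0 < b) :
    ∫ t in (0:ℝ)..1, geomInterp a b t = a * g₂ (b / a) := by
  have hba : 0 < b / a := div_pos hb ha
  have hexp : ∀ t, geomInterp a b t = a * exp (log (b / a) * t) := fun t => by
    rw [geomInterp_eq_exp ha hb, log_div hb.ne' ha.ne', ← exp_log ha, ← exp_add, log_exp]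
    ring_nf
  simp only [hexp, intervalIntegral.integral_const_mul]
  by_cases h1 : b / a = 1
  · simp [h1, g₂]
  · have hlog : log (b / a) ≠ 0 := fun h => h1 (eq_one_of_pos_of_log_eq_zero hba h)
    rw [intervalIntegral.integral_comp_mul_left (fun x => exp x) hlog, integral_exp, g₂, if_neg h1,
      mul_one, mul_zero, exp_zero, exp_log hba, smul_eq_mul]
    ring

end geomInterp

section substitution

variable {a b : ℝ} {f f' : ℝ → ℝ}

lemma integral_div_self_eq_integral_comp_geomInterp (ha : 0 < a) (hab : a < b)
    (hf : ContinuousOn f (Icc a b)) :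
    ∫ x in a..b, f x / x = (log b - log a) * ∫ t in (0:ℝ)..1, f (geomInterp a b t) := by
  have hb : 0 < b := ha.trans hab
  have hg : ContinuousOn (fun x => f x / x) (geomInterp a b '' uIcc 0 1) := by
    rw [uIcc_of_le zero_le_one, geomInterp_image_Icc ha hab]
    exact hf.div continuousOn_id fun x hx => (ha.trans_le hx.1).ne'
  have h := intervalIntegral.integral_comp_mul_deriv' (fun t _ => hasDerivAt_geomInterp ha hb t)
    (continuous_const.mul (continuous_geomInterp ha hb)).continuousOn hg
  rw [geomInterp_zero, geomInterp_one] at h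
  rw [← h, ← intervalIntegral.integral_const_mul]
  refine intervalIntegral.integral_congr fun t _ => ?_
  have := (geomInterp_pos ha hb t).ne'
  simp only [Function.comp_apply]
  field_simp

lemma intervalIntegrable_comp_geomInterp_mul_deriv (ha : 0 < a) (hab : a < b)
    (hf : IntervalIntegrable f volume a b) :
    IntervalIntegrable (fun t => f (geomInterp a b t) * ((log b - log a) * geomInterp a b t))
      volume 0 1 := by
  have hb : 0 < b := ha.trans hab
  rw [intervalIntegrable_iff_integrableOn_Icc_of_le hab.le, ← geomInterp_image_Icc ha hab,
    integrableOn_image_iff_integrableOn_abs_deriv_smul measurableSet_Icc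
      (fun t _ => (hasDerivAt_geomInterp ha hb t).hasDerivWithinAt)
      (strictMono_geomInterp ha hab).injective.injOn] at hf
  rw [intervalIntegrable_iff_integrableOn_Icc_of_le zero_le_one]
  refine hf.congr_fun (fun t _ => ?_) measurableSet_Icc
  simp only [smul_eq_mul]
  rw [abs_of_pos (mul_pos (sub_pos.2 (log_lt_log ha hab)) (geomInterp_pos ha hb t)),
    mul_comm]

lemma trapezoid_sub_integral_div_self_eq (ha : 0 < a) (hab : a < b)
    (hf : ∀ x ∈ Icc a b, HasDerivAt f (f' x) x) (hf' : IntervalIntegrable f' volume a b) :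
    (f a + f b) / 2 - 1 / (log b - log a) * ∫ x in a..b, f x / x =
      (log b - log a) / 2 *
        ∫ t in (0:ℝ)..1, (2 * t - 1) * (geomInterp a b t * f' (geomInterp a b t)) := by
  have hb : 0 < b := ha.trans hab
  have hL : log b - log a ≠ 0 := (sub_pos.2 (log_lt_log ha hab)).ne'
  have hmem : ∀ t ∈ uIcc (0:ℝ) 1, geomInterp a b t ∈ Icc a b := fun t ht => by
    rw [uIcc_of_le zero_le_one] at ht
    exact geomInterp_image_Icc ha hab ▸ mem_image_of_mem _ ht
  have hparts := intervalIntegral.integral_mul_deriv_eq_deriv_mul (u := fun t => 2 * t - 1)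
    (u' := fun _ => 2) (v := fun t => f (geomInterp a b t))
    (fun t _ => by simpa using ((hasDerivAt_id t).const_mul 2).sub_const 1)
    (fun t ht => (hf _ (hmem t ht)).comp t (hasDerivAt_geomInterp ha hb t))
    intervalIntegrable_const (intervalIntegrable_comp_geomInterp_mul_deriv ha hab hf')
  have hscale : ∫ t in (0:ℝ)..1, (2 * t - 1) *
        (f' (geomInterp a b t) * ((log b - log a) * geomInterp a b t)) =
      (log b - log a) *
        ∫ t in (0:ℝ)..1, (2 * t - 1) * (geomInterp a b t * f' (geomInterp a b t)) := by
    rw [← intervalIntegral.integral_const_mul]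
    exact intervalIntegral.integral_congr fun t _ => by ring
  rw [integral_div_self_eq_integral_comp_geomInterp ha hab
      fun x hx => (hf x hx).continuousAt.continuousWithinAt]
  rw [hscale, intervalIntegral.integral_const_mul, geomInterp_zero, geomInterp_one] at hparts
  rw [← mul_assoc, one_div_mul_cancel hL, one_mul]
  linarith

end substitution

lemma g₂_nonneg {u : ℝ} (hu : 0 ≤ u) : 0 ≤ g₂ u := by
  unfold g₂
  split_ifs with h
  · exact zero_le_one
  · rcases lt_or_gt_of_ne h with hlt | hgt
    · exact div_nonneg_of_nonpos (by linarith) (log_nonpos hu hlt.le)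
    · exact div_nonneg (by linarith) (log_nonneg hgt.le)

lemma SGeometricallyConvexOn.le_rpow_mul_rpow {s : ℝ} {J : Set ℝ} {h : ℝ → ℝ}
    (hconv : SGeometricallyConvexOn s J h) (hs0 : 0 ≤ s) (hs1 : s ≤ 1) {x y t : ℝ}
    (hx : x ∈ J) (hy : y ∈ J) (hx0 : 0 ≤ h x) (hx1 : h x ≤ 1) (hy0 : 0 ≤ h y) (hy1 : h y ≤ 1)
    (ht : t ∈ Icc (0:ℝ) 1) :
    h (x ^ t * y ^ (1 - t)) ≤ h x ^ (s * t) * h y ^ (s * (1 - t)) := by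
  have hexp : ∀ {c u : ℝ}, 0 ≤ c → c ≤ 1 → 0 ≤ u → u ≤ 1 → c ^ u ^ s ≤ c ^ (s * u) :=
    fun hc0 hc1 hu0 hu1 => rpow_le_rpow_of_exponent_ge' hc0 hc1 (mul_nonneg hs0 hu0)
      ((mul_le_of_le_one_left hu0 hs1).trans (self_le_rpow_of_le_one hu0 hu1 hs1))
  calc h (x ^ t * y ^ (1 - t)) ≤ h x ^ t ^ s * h y ^ (1 - t) ^ s := hconv x hx y hy t ht
    _ ≤ h x ^ (s * t) * h y ^ (s * (1 - t)) :=
      mul_le_mul (hexp hx0 hx1 ht.1 ht.2) (hexp hy0 hy1 (by linarith [ht.2]) (by linarith [ht.1]))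
        (rpow_nonneg hy0 _) (rpow_nonneg hx0 _)

lemma SGeometricallyConvexOn.geomInterp_mul_abs_le {s q a b t : ℝ} {g : ℝ → ℝ}
    (hconv : SGeometricallyConvexOn s (Icc a b) (fun x => |g x| ^ q)) (hs0 : 0 ≤ s) (hs1 : s ≤ 1)
    (hq : 0 < q) (ha : 0 ≤ a) (hab : a ≤ b) (hga : |g a| ≤ 1) (hgb : |g b| ≤ 1)
    (ht : t ∈ Icc (0:ℝ) 1) :
    geomInterp a b t * |g (geomInterp a b t)| ≤ geomInterp (a * |g a| ^ s) (b * |g b| ^ s) t := by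
  have hpow := hconv.le_rpow_mul_rpow hs0 hs1 (right_mem_Icc.2 hab) (left_mem_Icc.2 hab)
    (by positivity) (rpow_le_one (abs_nonneg _) hgb hq.le) (by positivity)
    (rpow_le_one (abs_nonneg _) hga hq.le) ht
  have hg : |g (geomInterp a b t)| ≤ geomInterp (|g a| ^ s) (|g b| ^ s) t := by
    rw [← rpow_le_rpow_iff (abs_nonneg _) (geomInterp_nonneg (by positivity) (by positivity) t) hq,
      geomInterp_rpow (by positivity) (by positivity), geomInterp, mul_comm]
    convert hpow using 1
    simp only [geomInterp, ← rpow_mul (abs_nonneg _)]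
    ring_nf
  rw [geomInterp_mul ha (ha.trans hab) (by positivity) (by positivity)]
  exact mul_le_mul_of_nonneg_left hg (geomInterp_nonneg ha (ha.trans hab) t)

lemma integral_abs_two_mul_sub_one_rpow {p : ℝ} (hp : 0 ≤ p) :
    ∫ t in (0:ℝ)..1, |2 * t - 1| ^ p = 1 / (p + 1) := by
  have hcont : Continuous fun u : ℝ => |u| ^ p := continuous_abs.rpow_const fun _ => Or.inr hp
  have hright : ∫ u in (0:ℝ)..1, |u| ^ p = 1 / (p + 1) := by
    rw [intervalIntegral.integral_congr (g := fun u => u ^ p) fun u hu => by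
      rw [uIcc_of_le zero_le_one] at hu; simp only [abs_of_nonneg hu.1]]
    rw [integral_rpow (Or.inl (by linarith)), one_rpow, zero_rpow (by linarith)]
    ring
  have hleft : ∫ u in (-1:ℝ)..0, |u| ^ p = ∫ u in (0:ℝ)..1, |u| ^ p := by
    simpa using (intervalIntegral.integral_comp_neg (a := 0) (b := 1) fun u => |u| ^ p).symm
  rw [intervalIntegral.integral_comp_mul_sub (fun u => |u| ^ p) two_ne_zero,
    ← intervalIntegral.integral_add_adjacent_intervals (b := 0)
      (hcont.intervalIntegrable _ _) (hcont.intervalIntegrable _ _)]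
  norm_num [hleft, hright]
  ring

lemma intervalIntegral_mul_le_Lp_mul_Lq_of_nonneg {p q a b : ℝ} (hpq : p.HolderConjugate q)
    {f g : ℝ → ℝ} (hab : a ≤ b) (hf : ContinuousOn f (Icc a b)) (hg : ContinuousOn g (Icc a b))
    (hf0 : ∀ t ∈ Icc a b, 0 ≤ f t) (hg0 : ∀ t ∈ Icc a b, 0 ≤ g t) :
    ∫ t in a..b, f t * g t ≤
      (∫ t in a..b, f t ^ p) ^ (1 / p) * (∫ t in a..b, g t ^ q) ^ (1 / q) := by
  have hae : ∀ {P : ℝ → Prop}, (∀ t ∈ Icc a b, P t) → ∀ᵐ t ∂volume.restrict (Ioc a b), P t :=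
    fun hP => (ae_restrict_iff' measurableSet_Ioc).2
      (ae_of_all _ fun t ht => hP t (Ioc_subset_Icc_self ht))
  have hmemLp : ∀ {h : ℝ → ℝ} (r), ContinuousOn h (Icc a b) →
      MemLp h r (volume.restrict (Ioc a b)) := fun r hh => by
    obtain ⟨C, hC⟩ := isCompact_Icc.exists_bound_of_continuousOn hh
    exact MemLp.of_bound ((hh.mono Ioc_subset_Icc_self).aestronglyMeasurable measurableSet_Ioc) C
      (hae hC)
  simp only [intervalIntegral.integral_of_le hab]
  exact integral_mul_le_Lp_mul_Lq_of_nonneg hpq (hae hf0) (hae hg0) (hmemLp _ hf)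
    (hmemLp _ hg)

lemma integral_abs_two_mul_sub_one_mul_geomInterp_le {A B q : ℝ} (hA : 0 < A) (hB : 0 < B)
    (hq : 1 < q) :
    ∫ t in (0:ℝ)..1, |2 * t - 1| * geomInterp A B t ≤
      ((q - 1) / (2 * q - 1)) ^ (1 - 1 / q) * (A * g₂ ((B / A) ^ q) ^ (1 / q)) := by
  have hpq : (q / (q - 1)).HolderConjugate q := (Real.HolderConjugate.conjExponent hq).symm
  have hholder := intervalIntegral_mul_le_Lp_mul_Lq_of_nonneg hpq (f := fun t => |2 * t - 1|)
    zero_le_one (by fun_prop) (continuous_geomInterp hA hB).continuousOn (fun t _ => abs_nonneg _)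
    (fun t _ => (geomInterp_pos hA hB t).le)
  have hweight : ∫ t in (0:ℝ)..1, |2 * t - 1| ^ (q / (q - 1)) = (q - 1) / (2 * q - 1) := by
    have hq1 : q - 1 ≠ 0 := by linarith
    rw [integral_abs_two_mul_sub_one_rpow hpq.nonneg, div_add_one hq1, one_div_div]
    ring
  have hexponent : 1 / (q / (q - 1)) = 1 - 1 / q := by field_simp
  have hpower : ∫ t in (0:ℝ)..1, geomInterp A B t ^ q = A ^ q * g₂ ((B / A) ^ q) := by
    simp only [geomInterp_rpow hA.le hB.le]
    rw [integral_geomInterp (rpow_pos_of_pos hA q) (rpow_pos_of_pos hB q), div_rpow hB.le hA.le]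
  have hroot : (A ^ q * g₂ ((B / A) ^ q)) ^ (1 / q) = A * g₂ ((B / A) ^ q) ^ (1 / q) := by
    rw [mul_rpow (by positivity) (g₂_nonneg (by positivity)), ← rpow_mul hA.le,
      mul_one_div_cancel (by positivity), rpow_one]
  rwa [hweight, hexponent, hpower, hroot] at hholder

lemma geomInterp_eq_zero {A B t : ℝ} (hAB : A = 0 ∨ B = 0) (ht : t ∈ Ioo (0:ℝ) 1) :
    geomInterp A B t = 0 := by
  rcases hAB with rfl | rfl
  · simp [geomInterp, zero_rpow (sub_ne_zero.2 ht.2.ne')]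
  · simp [geomInterp, zero_rpow ht.1.ne']

lemma abs_integral_le_of_abs_le_geomInterp {A B q : ℝ} {h : ℝ → ℝ} (hA : 0 ≤ A) (hB : 0 ≤ B)
    (hq : 1 < q) (hh : ∀ t ∈ Icc (0:ℝ) 1, |h t| ≤ |2 * t - 1| * geomInterp A B t) :
    |∫ t in (0:ℝ)..1, h t| ≤
      ((q - 1) / (2 * q - 1)) ^ (1 - 1 / q) * (A * g₂ ((B / A) ^ q) ^ (1 / q)) := by
  by_cases hAB : A = 0 ∨ B = 0
  · have hzero : ∫ t in (0:ℝ)..1, h t = 0 := by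
      rw [intervalIntegral.integral_of_le zero_le_one, integral_Ioc_eq_integral_Ioo]
      refine setIntegral_eq_zero_of_forall_eq_zero fun t ht => abs_nonpos_iff.1 ?_
      simpa [geomInterp_eq_zero hAB ht] using hh t (Ioo_subset_Icc_self ht)
    rw [hzero, abs_zero]
    have : 0 ≤ g₂ ((B / A) ^ q) := g₂_nonneg (by positivity)
    have : 0 ≤ (q - 1) / (2 * q - 1) := div_nonneg (by linarith) (by linarith)
    positivity
  obtain ⟨hA0, hB0⟩ := not_or.1 hAB
  replace hA := hA.lt_of_ne' hA0
  replace hB := hB.lt_of_ne' hB0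
  calc |∫ t in (0:ℝ)..1, h t| ≤ ∫ t in (0:ℝ)..1, |2 * t - 1| * geomInterp A B t :=
        intervalIntegral.norm_integral_le_of_norm_le (f := h) zero_le_one
          (ae_of_all _ fun t ht => by simpa using hh t (Ioc_subset_Icc_self ht))
          (((by fun_prop : Continuous fun t : ℝ => |2 * t - 1|).mul
            (continuous_geomInterp hA hB)).intervalIntegrable _ _)
    _ ≤ _ := integral_abs_two_mul_sub_one_mul_geomInterp_le hA hB hq

theorem stmt_10_general
    (I : Set ℝ) (hI : I.OrdConnected) (hIpos : I ⊆ Set.Ioi (0:ℝ))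
    (f f' : ℝ → ℝ)
    (a b : ℝ) (ha : a ∈ interior I) (hb : b ∈ interior I) (hab : a < b)
    (hdiff : ∀ x ∈ interior I, HasDerivAt f (f' x) x)
    (hint : IntervalIntegrable f' volume a b)
    (q s : ℝ) (hq : 1 < q) (hs : s ∈ Set.Ioc (0:ℝ) 1)
    (hconv : SGeometricallyConvexOn s (Set.Icc a b) (fun x => |f' x| ^ q))
    (hfa : |f' a| ≤ 1) (hfb : |f' b| ≤ 1) :
    |(f a + f b) / 2 - (1 / (Real.log b - Real.log a)) * ∫ x in a..b, f x / x| ≤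
      (1 / 2 : ℝ) * Real.log (b / a) * ((q - 1) / (2 * q - 1)) ^ (1 - 1 / q) *
        (a * |f' a| ^ s * (g₂ ((b * |f' b| ^ s / (a * |f' a| ^ s)) ^ (q))) ^ (1 / q)
         + b * |f' b| ^ s * (g₂ ((a * |f' a| ^ s / (b * |f' b| ^ s)) ^ (q))) ^ (1 / q)) := by
  have ha0 : 0 < a := hIpos (interior_subset ha)
  have hb0 : 0 < b := ha0.trans hab
  have hL : 0 < log b - log a := sub_pos.2 (log_lt_log ha0 hab)
  have hC : 0 ≤ ((q - 1) / (2 * q - 1)) ^ (1 - 1 / q) :=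
    rpow_nonneg (div_nonneg (by linarith) (by linarith)) _
  have hderiv : ∀ x ∈ Icc a b, HasDerivAt f (f' x) x :=
    fun x hx => hdiff x (hI.interior.out ha hb hx)
  have hbound := abs_integral_le_of_abs_le_geomInterp
    (A := a * |f' a| ^ s) (B := b * |f' b| ^ s)
    (h := fun t => (2 * t - 1) * (geomInterp a b t * f' (geomInterp a b t)))
    (by positivity) (by positivity) hq fun t ht => by
      rw [abs_mul, abs_mul, abs_of_pos (geomInterp_pos ha0 hb0 t)]
      exact mul_le_mul_of_nonneg_left (hconv.geomInterp_mul_abs_le hs.1.le hs.2 (by linarith)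
        ha0.le hab.le hfa hfb ht) (abs_nonneg _)
  have hsecond : 0 ≤ b * |f' b| ^ s * g₂ ((a * |f' a| ^ s / (b * |f' b| ^ s)) ^ q) ^ (1 / q) := by
    have := g₂_nonneg (u := (a * |f' a| ^ s / (b * |f' b| ^ s)) ^ q) (by positivity)
    positivity
  rw [trapezoid_sub_integral_div_self_eq ha0 hab hderiv hint, abs_mul, abs_of_pos (by positivity),
    log_div hb0.ne' ha0.ne']
  calc _ ≤ (log b - log a) / 2 * (((q - 1) / (2 * q - 1)) ^ (1 - 1 / q) *
          (a * |f' a| ^ s * g₂ ((b * |f' b| ^ s / (a * |f' a| ^ s)) ^ q) ^ (1 / q))) :=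
        mul_le_mul_of_nonneg_left hbound (by positivity)
    _ ≤ _ := by
      rw [← mul_assoc, div_eq_mul_one_div, mul_comm (log b - log a)]
      exact mul_le_mul_of_nonneg_left (le_add_of_nonneg_right hsecond) (by positivity)

theorem stmt_10
    (I : Set ℝ) (hI : I.OrdConnected) (hIpos : I ⊆ Set.Ioi (0:ℝ))
    (f f' : ℝ → ℝ) (hfpos : ∀ x ∈ I, 0 < f x)
    (a b : ℝ) (ha : a ∈ interior I) (hb : b ∈ interior I) (hab : a < b)
    (hdiff : ∀ x ∈ interior I, HasDerivAt f (f' x) x)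
    (hint : IntervalIntegrable f' volume a b)
    (q s : ℝ) (hq : 1 < q) (hs : s ∈ Set.Ioc (0:ℝ) 1)
    (hconv : SGeometricallyConvexOn s (Set.Icc a b) (fun x => |f' x| ^ q))
    (hfa : |f' a| ≤ 1) (hfb : |f' b| ≤ 1) :
    |(f a + f b) / 2 - (1 / (Real.log b - Real.log a)) * ∫ x in a..b, f x / x| ≤
      (1 / 2 : ℝ) * Real.log (b / a) * ((q - 1) / (2 * q - 1)) ^ (1 - 1 / q) *
        (a * |f' a| ^ s * (g₂ ((b * |f' b| ^ s / (a * |f' a| ^ s)) ^ (q))) ^ (1 / q)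
         + b * |f' b| ^ s * (g₂ ((a * |f' a| ^ s / (b * |f' b| ^ s)) ^ (q))) ^ (1 / q)) :=
  stmt_10_general I hI hIpos f f' a b ha hb hab hdiff hint q s hq hs hconv hfa hfb
end
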